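/- Let ψ be a nontrivial multiplicative character on F_q and ψ' its lift to F_{q^r} defined by ψ'(x) = ψ(N(x)) where N is the norm from F_{q^r} to F_q. Then G(ψ') = (-1)^{r-1} G(ψ)^r. -/

import Mathlib

/-!
Following Ireland–Rosen §11.4: to a monic `f ∈ F[X]` of degree `n` attach
`λ(f) = ψ(-aₙ₋₁) χ((-1)ⁿ a₀)`, the additive character of the trace times the multiplicative
character of the norm of a root of `f`; `λ` is multiplicative. Since `χ ≠ 1`, the sums
`Aₙ = ∑_{deg f = n} λ(f)` are `1, G(χ, ψ), 0, 0, …`, so `L(t) = ∑ₙ Aₙ tⁿ = 1 + G t`. Unique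
factorisation gives the Euler product `L(t) = ∏_P (1 - λ(P) t^{deg P})⁻¹`, and comparing
logarithmic derivatives (coefficientwise: `n Aₙ = ∑_{k ≤ n} bₖ Aₙ₋ₖ`) yields
`bₖ = ∑_{d ∣ k} ∑_{deg P = d} d λ(P)^{k/d} = (-1)^{k-1} Gᵏ`.
Finally, grouping the elements of `E` by their minimal polynomial `P` over `F` shows that the lifted
Gauss sum is `b_{[E:F]}`: when `deg P = d ∣ [E:F]`, `P` has `d` roots in `E`, each contributing
`χ(N α) ψ(Tr α) = λ(P)^{[E:F]/d}`.
-/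

/-- The Gauss sum over a finite field of characteristic `p`, with values in `ℂ`. -/
noncomputable def gaussC (p : ℕ) (F : Type*) [Field F] [Fintype F] [Algebra (ZMod p) F]
    (ψ : MulChar F ℂ) : ℂ :=
  ∑ x : F, ψ x *
    Complex.exp (2 * Real.pi * Complex.I * ((Algebra.trace (ZMod p) F x).val : ℂ) / p)

open Polynomial Finset UniqueFactorizationMonoid

namespace DavenportHasse

open scoped Classical

lemma sum_Icc_sum_divisors {M : Type*} [AddCommMonoid M] (n : ℕ) (h : ℕ → ℕ → M) :
    ∑ k ∈ Icc 1 n, ∑ d ∈ k.divisors, h d (k / d) =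
      ∑ d ∈ Icc 1 n, ∑ j ∈ Icc 1 (n / d), h d j := by
  rw [sum_sigma', sum_sigma']
  refine sum_nbij' (fun x => ⟨x.2, x.1 / x.2⟩) (fun x => ⟨x.2 * x.1, x.1⟩) ?_ ?_ ?_ ?_ ?_
  · rintro ⟨k, d⟩ hx
    simp only [mem_sigma, mem_Icc, Nat.mem_divisors] at hx
    obtain ⟨⟨hk, hkn⟩, ⟨j, rfl⟩, -⟩ := hx
    have hd : 0 < d := Nat.pos_of_mul_pos_right hk
    have hj : 0 < j := Nat.pos_of_mul_pos_left hk
    simp only [mem_sigma, mem_Icc, Nat.mul_div_cancel_left j hd, Nat.le_div_iff_mul_le hd]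
    exact ⟨⟨hd, (Nat.le_mul_of_pos_right d hj).trans hkn⟩, hj, by linarith⟩
  · rintro ⟨d, j⟩ hx
    simp only [mem_sigma, mem_Icc] at hx
    obtain ⟨⟨hd, -⟩, hj, hjn⟩ := hx
    simp only [mem_sigma, mem_Icc, Nat.mem_divisors]
    exact ⟨⟨Nat.mul_pos hj hd, (Nat.le_div_iff_mul_le hd).1 hjn⟩, dvd_mul_left d j,
      (Nat.mul_pos hj hd).ne'⟩
  · rintro ⟨k, d⟩ hx
    simp only [mem_sigma, Nat.mem_divisors] at hx
    obtain ⟨-, ⟨j, rfl⟩, hk⟩ := hx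
    simp [Nat.mul_div_cancel_left j (Nat.pos_of_ne_zero (left_ne_zero_of_mul hk)), mul_comm]
  · rintro ⟨d, j⟩ hx
    simp [Nat.mul_div_cancel _ (mem_Icc.1 (mem_sigma.1 hx).1).1]
  · intros
    rfl

section Monics

variable {R : Type*} [CommRing R] [Nontrivial R]

noncomputable def monicCoeffEquiv (n : ℕ) :
    {p : R[X] // p.Monic ∧ p.natDegree = n} ≃ (Fin n → R) :=
  (monicEquivDegreeLT n).trans (degreeLTEquiv R n).toEquiv

lemma coeff_monicCoeffEquiv_symm {n : ℕ} (c : Fin n → R) (i : Fin n) :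
    ((monicCoeffEquiv n).symm c : R[X]).coeff i = c i := by
  have hi : (i : ℕ) ≠ ((monicCoeffEquiv n).symm c : R[X]).natDegree := by
    rw [((monicCoeffEquiv n).symm c).2.2]
    exact i.2.ne
  rw [← eraseLead_coeff_of_ne _ hi]
  exact congrFun ((monicCoeffEquiv n).apply_symm_apply c) i

variable [Fintype R]

noncomputable def monicsOfDegree (n : ℕ) : Finset R[X] :=
  univ.map ((monicCoeffEquiv n).symm.toEmbedding.trans (Function.Embedding.subtype _))

lemma mem_monicsOfDegree {n : ℕ} {f : R[X]} :
    f ∈ monicsOfDegree n ↔ f.Monic ∧ f.natDegree = n := by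
  refine ⟨fun hf => ?_, fun hf => mem_map.2 ⟨monicCoeffEquiv n ⟨f, hf⟩, mem_univ _, by simp⟩⟩
  obtain ⟨c, -, rfl⟩ := mem_map.1 hf
  exact ((monicCoeffEquiv n).symm c).2

lemma sum_monicsOfDegree {M : Type*} [AddCommMonoid M] (n : ℕ) (g : R[X] → M) :
    ∑ f ∈ monicsOfDegree n, g f = ∑ c : Fin n → R, g ((monicCoeffEquiv n).symm c) :=
  sum_map _ _ _

end Monics

section Factorization

variable {F : Type*} [Field F]

lemma card_filter_pow_dvd {P f : F[X]} (hP : Irreducible P) (hPm : P.Monic) (hf : f ≠ 0) :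
    #{j ∈ Icc 1 (f.natDegree / P.natDegree) | P ^ j ∣ f} = (normalizedFactors f).count P := by
  set c := (normalizedFactors f).count P
  have hdvd : ∀ j, P ^ j ∣ f ↔ j ≤ c := fun j => by
    rw [pow_dvd_iff_le_emultiplicity, emultiplicity_eq_count_normalizedFactors hP hf,
      hPm.normalize_eq_self, Nat.cast_le]
  have hc : c * P.natDegree ≤ f.natDegree := by
    simpa [natDegree_pow, mul_comm] using natDegree_le_of_dvd ((hdvd c).2 le_rfl) hf
  have hc' : c ≤ f.natDegree / P.natDegree := (Nat.le_div_iff_mul_le hP.natDegree_pos).2 hc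
  rw [show {j ∈ Icc 1 (f.natDegree / P.natDegree) | P ^ j ∣ f} = Icc 1 c by
    ext j; simp only [mem_filter, mem_Icc, hdvd]; omega, Nat.card_Icc, Nat.add_sub_cancel]

variable [Fintype F]

noncomputable def irreducibleMonicsOfDegree (d : ℕ) : Finset F[X] :=
  (monicsOfDegree d).filter Irreducible

lemma mem_irreducibleMonicsOfDegree {d : ℕ} {P : F[X]} :
    P ∈ irreducibleMonicsOfDegree d ↔ P.Monic ∧ P.natDegree = d ∧ Irreducible P := by
  rw [irreducibleMonicsOfDegree, mem_filter, mem_monicsOfDegree, and_assoc]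

lemma pairwiseDisjoint_irreducibleMonicsOfDegree (s : Set ℕ) :
    s.PairwiseDisjoint (irreducibleMonicsOfDegree (F := F)) := by
  intro d₁ _ d₂ _ hne
  refine disjoint_left.2 fun P h₁ h₂ => hne ?_
  rw [← (mem_irreducibleMonicsOfDegree.1 h₁).2.1, (mem_irreducibleMonicsOfDegree.1 h₂).2.1]

lemma sum_natDegree_mul_count_normalizedFactors {f : F[X]} (hf : f.Monic) :
    ∑ d ∈ Icc 1 f.natDegree, ∑ P ∈ irreducibleMonicsOfDegree d,
      d * (normalizedFactors f).count P = f.natDegree := by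
  set M := normalizedFactors f
  have hirr : ∀ P ∈ M, Irreducible P := fun P hP => irreducible_of_normalized_factor P hP
  have hmonic : ∀ P ∈ M, P.Monic := fun P hP => by
    rw [← normalize_normalized_factor P hP]
    exact monic_normalize (hirr P hP).ne_zero
  have hsub : M.toFinset ⊆ (Icc 1 f.natDegree).biUnion irreducibleMonicsOfDegree := by
    intro P hP
    rw [Multiset.mem_toFinset] at hP
    refine mem_biUnion.2 ⟨P.natDegree, mem_Icc.2 ⟨(hirr P hP).natDegree_pos, ?_⟩,
      mem_irreducibleMonicsOfDegree.2 ⟨hmonic P hP, rfl, hirr P hP⟩⟩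
    exact natDegree_le_of_dvd (dvd_of_mem_normalizedFactors hP) hf.ne_zero
  have hprod : M.prod.Monic := by simpa using monic_multiset_prod_of_monic M id hmonic
  calc ∑ d ∈ Icc 1 f.natDegree, ∑ P ∈ irreducibleMonicsOfDegree d, d * M.count P
      = ∑ P ∈ (Icc 1 f.natDegree).biUnion irreducibleMonicsOfDegree, M.count P * P.natDegree := by
        rw [sum_biUnion (pairwiseDisjoint_irreducibleMonicsOfDegree _)]
        refine sum_congr rfl fun d _ => sum_congr rfl fun P hP => ?_
        rw [(mem_irreducibleMonicsOfDegree.1 hP).2.1, mul_comm]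
    _ = ∑ P ∈ M.toFinset, M.count P * P.natDegree := by
        refine (sum_subset hsub fun P _ hP => ?_).symm
        rw [Multiset.count_eq_zero.2 (mt Multiset.mem_toFinset.2 hP), zero_mul]
    _ = (M.map natDegree).sum := by simp [Finset.sum_multiset_map_count]
    _ = M.prod.natDegree := (natDegree_multiset_prod_of_monic M hmonic).symm
    _ = f.natDegree := by rw [eq_of_monic_of_associated hprod hf (prod_normalizedFactors hf.ne_zero)]

lemma sum_prime_power_dvd_eq_natDegree {f : F[X]} (hf : f.Monic) :
    ∑ d ∈ Icc 1 f.natDegree, ∑ j ∈ Icc 1 (f.natDegree / d), ∑ P ∈ irreducibleMonicsOfDegree d,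
      (if P ^ j ∣ f then d else 0) = f.natDegree := by
  conv_rhs => rw [← sum_natDegree_mul_count_normalizedFactors hf]
  refine sum_congr rfl fun d _ => ?_
  rw [sum_comm]
  refine sum_congr rfl fun P hP => ?_
  obtain ⟨hPm, rfl, hPi⟩ := mem_irreducibleMonicsOfDegree.1 hP
  rw [← sum_filter, sum_const, smul_eq_mul, card_filter_pow_dvd hPi hPm hf.ne_zero, mul_comm]

end Factorization

section NormTraceChar

variable {F : Type*} [Field F] {R : Type*} [CommRing R] (χ : MulChar F R) (ψ : AddChar F R)

noncomputable def normTraceChar (f : F[X]) : R :=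
  ψ (-f.nextCoeff) * χ ((-1) ^ f.natDegree * f.coeff 0)

lemma normTraceChar_one : normTraceChar χ ψ 1 = 1 := by
  simp [normTraceChar, nextCoeff]

lemma normTraceChar_mul {f g : F[X]} (hf : f.Monic) (hg : g.Monic) :
    normTraceChar χ ψ (f * g) = normTraceChar χ ψ f * normTraceChar χ ψ g := by
  simp only [normTraceChar, hf.nextCoeff_mul hg, natDegree_mul hf.ne_zero hg.ne_zero,
    mul_coeff_zero, neg_add, AddChar.map_add_eq_mul, pow_add]
  rw [mul_mul_mul_comm ((-1 : F) ^ _), map_mul]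
  ring

lemma normTraceChar_pow {f : F[X]} (hf : f.Monic) (j : ℕ) :
    normTraceChar χ ψ (f ^ j) = normTraceChar χ ψ f ^ j := by
  induction j with
  | zero => simpa using normTraceChar_one χ ψ
  | succ j ih => rw [pow_succ, normTraceChar_mul χ ψ (hf.pow j) hf, ih, pow_succ]

lemma normTraceChar_monicCoeffEquiv_symm {m : ℕ} (c : Fin (m + 1) → F) :
    normTraceChar χ ψ ((monicCoeffEquiv (m + 1)).symm c) =
      ψ (-c (Fin.last m)) * χ ((-1) ^ (m + 1) * c 0) := by
  rw [normTraceChar, nextCoeff, ((monicCoeffEquiv _).symm c).2.2, if_neg m.succ_ne_zero,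
    Nat.add_sub_cancel, ← coeff_monicCoeffEquiv_symm c (Fin.last m),
    ← coeff_monicCoeffEquiv_symm c 0]
  rfl

variable [Fintype F]

noncomputable def monicSum (n : ℕ) : R := ∑ f ∈ monicsOfDegree n, normTraceChar χ ψ f

lemma monicSum_zero : monicSum χ ψ 0 = 1 := by
  rw [monicSum, sum_monicsOfDegree, Fintype.sum_unique,
    eq_one_of_monic_natDegree_zero ((monicCoeffEquiv 0).symm default).2.1
      ((monicCoeffEquiv 0).symm default).2.2, normTraceChar_one]

lemma monicSum_one : monicSum χ ψ 1 = gaussSum χ ψ := by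
  rw [monicSum, sum_monicsOfDegree, gaussSum]
  simp only [normTraceChar_monicCoeffEquiv_symm, zero_add, pow_one, neg_one_mul]
  rw [← (Equiv.funUnique (Fin 1) F).symm.sum_comp, ← Equiv.sum_comp (Equiv.neg F)]
  simp [mul_comm]

lemma monicSum_eq_zero [IsDomain R] (hχ : χ ≠ 1) {n : ℕ} (hn : 2 ≤ n) : monicSum χ ψ n = 0 := by
  obtain ⟨m, rfl⟩ := Nat.exists_eq_add_of_le' hn
  rw [monicSum, sum_monicsOfDegree]
  simp only [normTraceChar_monicCoeffEquiv_symm]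
  rw [← (Fin.consEquiv fun _ => F).sum_comp, Fintype.sum_prod_type]
  simp only [Fin.consEquiv_apply, ← Fin.succ_last, Fin.cons_succ, Fin.cons_zero, map_mul]
  calc _ = (∑ x, χ x) * ∑ t : Fin (m + 1) → F, χ ((-1) ^ (m + 2)) * ψ (-t (Fin.last m)) := by
        rw [sum_mul_sum]
        exact sum_congr rfl fun x _ => sum_congr rfl fun t _ => by ring
    _ = 0 := by rw [MulChar.sum_eq_zero_of_ne_one hχ, zero_mul]

lemma normTraceChar_mul_monicSum {g : F[X]} (hg : g.Monic) {n : ℕ} (hgn : g.natDegree ≤ n) :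
    normTraceChar χ ψ g * monicSum χ ψ (n - g.natDegree) =
      ∑ f ∈ monicsOfDegree n with g ∣ f, normTraceChar χ ψ f := by
  rw [monicSum, mul_sum]
  refine sum_bij (fun h _ => g * h) (fun h hh => ?_) (fun _ _ _ _ => mul_left_cancel₀ hg.ne_zero)
    (fun f hf => ?_) (fun h hh => (normTraceChar_mul χ ψ hg (mem_monicsOfDegree.1 hh).1).symm)
  · obtain ⟨hm, hd⟩ := mem_monicsOfDegree.1 hh
    refine mem_filter.2 ⟨mem_monicsOfDegree.2 ⟨hg.mul hm, ?_⟩, dvd_mul_right g h⟩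
    rw [natDegree_mul hg.ne_zero hm.ne_zero, hd]
    omega
  · obtain ⟨hf, h, rfl⟩ := mem_filter.1 hf
    obtain ⟨hfm, hfd⟩ := mem_monicsOfDegree.1 hf
    have hm := hg.of_mul_monic_left hfm
    refine ⟨h, mem_monicsOfDegree.2 ⟨hm, ?_⟩, rfl⟩
    rw [natDegree_mul hg.ne_zero hm.ne_zero] at hfd
    omega

noncomputable def primePowerSum (k : ℕ) : R :=
  ∑ d ∈ k.divisors, ∑ P ∈ irreducibleMonicsOfDegree d, d * normTraceChar χ ψ P ^ (k / d)

lemma natCast_mul_monicSum (n : ℕ) :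
    n * monicSum χ ψ n = ∑ k ∈ Icc 1 n, primePowerSum χ ψ k * monicSum χ ψ (n - k) := by
  set H : ℕ → ℕ → R := fun d j => ∑ P ∈ irreducibleMonicsOfDegree d,
    d * (normTraceChar χ ψ (P ^ j) * monicSum χ ψ (n - (P ^ j).natDegree))
  have hH : ∀ k ∈ Icc 1 n, primePowerSum χ ψ k * monicSum χ ψ (n - k) =
      ∑ d ∈ k.divisors, H d (k / d) := by
    intro k _
    rw [primePowerSum, sum_mul]
    refine sum_congr rfl fun d hd => ?_
    rw [sum_mul]
    refine sum_congr rfl fun P hP => ?_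
    obtain ⟨hPm, rfl, -⟩ := mem_irreducibleMonicsOfDegree.1 hP
    rw [normTraceChar_pow χ ψ hPm, natDegree_pow, Nat.div_mul_cancel (Nat.dvd_of_mem_divisors hd),
      mul_assoc]
  have hH' : ∀ d ∈ Icc 1 n, ∀ j ∈ Icc 1 (n / d), H d j = ∑ P ∈ irreducibleMonicsOfDegree d,
      ∑ f ∈ monicsOfDegree n, if P ^ j ∣ f then d * normTraceChar χ ψ f else 0 := by
    intro d hd j hj
    refine sum_congr rfl fun P hP => ?_
    obtain ⟨hPm, rfl, -⟩ := mem_irreducibleMonicsOfDegree.1 hP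
    rw [normTraceChar_mul_monicSum χ ψ (hPm.pow j), mul_sum, sum_filter]
    rw [natDegree_pow]
    exact (Nat.le_div_iff_mul_le (mem_Icc.1 hd).1).1 (mem_Icc.1 hj).2
  have hcount : ∀ f ∈ monicsOfDegree n, (n : R) * normTraceChar χ ψ f =
      ∑ d ∈ Icc 1 n, ∑ j ∈ Icc 1 (n / d), ∑ P ∈ irreducibleMonicsOfDegree d,
        if P ^ j ∣ f then d * normTraceChar χ ψ f else 0 := by
    intro f hf
    obtain ⟨hfm, rfl⟩ := mem_monicsOfDegree.1 hf
    conv_lhs => rw [← sum_prime_power_dvd_eq_natDegree hfm]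
    simp only [Nat.cast_sum, Nat.cast_ite, Nat.cast_zero, sum_mul, ite_mul, zero_mul]
  rw [sum_congr rfl hH, sum_Icc_sum_divisors, monicSum, mul_sum, sum_congr rfl hcount,
    sum_congr rfl fun d hd => sum_congr rfl (hH' d hd), sum_comm]
  refine sum_congr rfl fun d _ => ?_
  rw [sum_comm]
  exact sum_congr rfl fun j _ => sum_comm

lemma primePowerSum_one : primePowerSum χ ψ 1 = gaussSum χ ψ := by
  simpa [monicSum_zero, monicSum_one] using (natCast_mul_monicSum χ ψ 1).symm

lemma primePowerSum_add_two [IsDomain R] (hχ : χ ≠ 1) (m : ℕ) :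
    primePowerSum χ ψ (m + 2) = -(gaussSum χ ψ * primePowerSum χ ψ (m + 1)) := by
  have h := natCast_mul_monicSum χ ψ (m + 2)
  rw [monicSum_eq_zero χ ψ hχ le_add_self, mul_zero, sum_Icc_succ_top (by omega),
    sum_Icc_succ_top (by omega), sum_eq_zero fun k hk => by
      rw [monicSum_eq_zero χ ψ hχ (by grind), mul_zero]] at h
  simp only [Nat.sub_self, show m + 2 - (m + 1) = 1 by omega, monicSum_zero, monicSum_one] at h
  linear_combination -h

lemma primePowerSum_eq [IsDomain R] (hχ : χ ≠ 1) {k : ℕ} (hk : k ≠ 0) :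
    primePowerSum χ ψ k = (-1) ^ (k - 1) * gaussSum χ ψ ^ k := by
  induction k using Nat.twoStepInduction with
  | zero => exact absurd rfl hk
  | one => simpa using primePowerSum_one χ ψ
  | more m _ ih =>
    rw [primePowerSum_add_two χ ψ hχ, ih m.succ_ne_zero]
    simp only [Nat.add_sub_cancel, show m + 2 - 1 = m + 1 by omega]
    ring

end NormTraceChar

section Lift

variable {F : Type*} [Field F] {E : Type*} [Field E] [Fintype E] [Algebra F E]

open IntermediateField in
lemma mul_normTraceChar_minpoly {R : Type*} [CommRing R] (χ : MulChar F R) (ψ : AddChar F R)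
    (α : E) :
    χ (Algebra.norm F α) * ψ (Algebra.trace F E α) =
      normTraceChar χ ψ (minpoly F α) ^ (Module.finrank F E / (minpoly F α).natDegree) := by
  have hα : IsIntegral F α := .of_finite F α
  have hfinrank : Module.finrank F E / (minpoly F α).natDegree = Module.finrank F⟮α⟯ E := by
    rw [← adjoin.finrank hα, ← Module.finrank_mul_finrank F F⟮α⟯ E,
      Nat.mul_div_cancel_left _ Module.finrank_pos]
  have hnorm : Algebra.norm F (AdjoinSimple.gen F α) =
      (-1) ^ (minpoly F α).natDegree * (minpoly F α).coeff 0 := by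
    simpa [minpoly_gen] using
      Algebra.PowerBasis.norm_gen_eq_coeff_zero_minpoly (adjoin.powerBasis hα)
  rw [Algebra.norm_eq_norm_adjoin, hnorm, trace_eq_finrank_mul_minpoly_nextCoeff,
    ← nsmul_eq_mul, AddChar.map_nsmul_eq_pow, map_pow, normTraceChar, mul_pow, mul_comm,
    hfinrank]

lemma card_filter_minpoly_eq {P : F[X]} (hPm : P.Monic) (hP : Irreducible P)
    (hdvd : P.natDegree ∣ Module.finrank F E) :
    #{α : E | minpoly F α = P} = P.natDegree := by
  have : Fact (Irreducible P) := ⟨hP⟩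
  have hfinrank : Module.finrank F (AdjoinRoot P) = P.natDegree :=
    finrank_quotient_span_eq_natDegree
  have hroots : ∀ α : E, α ∈ P.aroots E ↔ minpoly F α = P := fun α => by
    rw [mem_aroots, and_iff_right hPm.ne_zero]
    exact ⟨fun h => (minpoly.eq_of_irreducible_of_monic hP h hPm).symm,
      fun h => h ▸ minpoly.aeval F α⟩
  rw [← Fintype.card_subtype, ← Nat.card_eq_fintype_card, ← hfinrank,
    ← FiniteField.natCard_algHom_of_finrank_dvd (hfinrank ▸ hdvd),
    Nat.card_congr ((AdjoinRoot.equiv E F P hPm.ne_zero).trans (Equiv.subtypeEquivRight hroots))]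

variable [Fintype F] {R : Type*} [CommRing R] (χ : MulChar F R) (ψ : AddChar F R)

lemma sum_norm_trace_eq_primePowerSum :
    ∑ α : E, χ (Algebra.norm F α) * ψ (Algebra.trace F E α) =
      primePowerSum χ ψ (Module.finrank F E) := by
  have hmaps : ∀ α ∈ (univ : Finset E),
      minpoly F α ∈ (Module.finrank F E).divisors.biUnion irreducibleMonicsOfDegree := by
    intro α _
    have hα : IsIntegral F α := .of_finite F α
    exact mem_biUnion.2 ⟨_, Nat.mem_divisors.2 ⟨minpoly.degree_dvd hα, Module.finrank_pos.ne'⟩,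
      mem_irreducibleMonicsOfDegree.2 ⟨minpoly.monic hα, rfl, minpoly.irreducible hα⟩⟩
  rw [← sum_fiberwise_of_maps_to hmaps, sum_biUnion (pairwiseDisjoint_irreducibleMonicsOfDegree _),
    primePowerSum]
  refine sum_congr rfl fun d hd => sum_congr rfl fun P hP => ?_
  obtain ⟨hPm, rfl, hPi⟩ := mem_irreducibleMonicsOfDegree.1 hP
  rw [sum_congr rfl fun α hα => by rw [mul_normTraceChar_minpoly, (mem_filter.1 hα).2], sum_const,
    card_filter_minpoly_eq hPm hPi (Nat.dvd_of_mem_divisors hd), nsmul_eq_mul]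

theorem sum_norm_trace_eq [IsDomain R] (hχ : χ ≠ 1) :
    ∑ α : E, χ (Algebra.norm F α) * ψ (Algebra.trace F E α) =
      (-1) ^ (Module.finrank F E - 1) * gaussSum χ ψ ^ Module.finrank F E := by
  rw [sum_norm_trace_eq_primePowerSum, primePowerSum_eq χ ψ hχ Module.finrank_pos.ne']

end Lift

end DavenportHasse

lemma gaussC_eq_gaussSum (p : ℕ) [NeZero p] (F : Type*) [Field F] [Fintype F]
    [Algebra (ZMod p) F] (ψ : MulChar F ℂ) :
    gaussC p F ψ =
      gaussSum ψ (ZMod.stdAddChar.compAddMonoidHom (Algebra.trace (ZMod p) F).toAddMonoidHom) := by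
  refine sum_congr rfl fun x _ => ?_
  rw [AddChar.compAddMonoidHom_apply, ZMod.stdAddChar_apply, ZMod.toCircle_apply]
  rfl

theorem stmt8_general (p r : ℕ) [Fact p.Prime]
    (F E : Type*) [Field F] [Fintype F] [Algebra (ZMod p) F]
    [Field E] [Fintype E] [Algebra (ZMod p) E] [Algebra F E]
    (hE : Fintype.card E = Fintype.card F ^ r)
    (ψ : MulChar F ℂ) (hψ : ψ ≠ 1)
    (ψ' : MulChar E ℂ) (hlift : ∀ x : E, ψ' x = ψ (Algebra.norm F x)) :
    gaussC p E ψ' = (-1) ^ (r - 1) * gaussC p F ψ ^ r := by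
  have : IsScalarTower (ZMod p) F E := .of_algebraMap_eq' (RingHom.ext_zmod _ _)
  have hr : Module.finrank F E = r :=
    Nat.pow_right_injective Fintype.one_lt_card (Module.card_eq_pow_finrank.symm.trans hE)
  rw [gaussC_eq_gaussSum, gaussC_eq_gaussSum, ← hr, ← DavenportHasse.sum_norm_trace_eq _ _ hψ,
    gaussSum]
  simp only [hlift, AddChar.compAddMonoidHom_apply, LinearMap.toAddMonoidHom_coe,
    Algebra.trace_trace]

theorem stmt8 (p s r : ℕ) [Fact p.Prime] (hs : 0 < s) (hr : 1 ≤ r)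
    (F E : Type*) [Field F] [Fintype F] [Algebra (ZMod p) F]
    [Field E] [Fintype E] [Algebra (ZMod p) E] [Algebra F E]
    (hF : Fintype.card F = p ^ s) (hE : Fintype.card E = Fintype.card F ^ r)
    (ψ : MulChar F ℂ) (hψ : ψ ≠ 1)
    (ψ' : MulChar E ℂ) (hlift : ∀ x : E, ψ' x = ψ (Algebra.norm F x)) :
    gaussC p E ψ' = (-1) ^ (r - 1) * gaussC p F ψ ^ r :=
  stmt8_general p r F E hE ψ hψ ψ' hlift
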